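/- Let ν be either (i) a Weibull distribution with shape k ∈ (0,1) and scale λ>0, with Φ(x)=(x/λ)^k, or (ii) a generalized lognormal distribution with parameters r>1, σ>0, μ∈ℝ, with Φ(x)=(log x)^r/(rσ^r). Let θ > 1 and F_Φ be the associated divergence-generating function, and define ψ(x) = a Φ⁻¹(x)^θ and I(c) = ∫_c^∞ e^y (ψ(y)+ψ'(y))(ψ'(y)+ψ''(y)) f((F_Φ'(e^y)−α₁)/α₂) dy. Then for all α₁ ∈ ℝ and α₂ > 0 there exists c > 0 such that I(c) is well-defined and finite. -/

import Mathlib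

open Filter MeasureTheory Set
open scoped ENNReal Topology

noncomputable section

/-- The `F`-divergence `D_F(η|ν)` between a reference density `f` and an
alternative density `g` on `(0,∞)` (the value `⊤` encodes an infinite divergence). -/
def Ddiv (F f g : ℝ → ℝ) : ℝ≥0∞ :=
  ∫⁻ x in Set.Ioi (0 : ℝ), ENNReal.ofReal (F (g x / f x) * f x)

/-- Generator of the polynomial (α-) divergence: `F(y) = (y^α - 1)/(α(α-1))`. -/
def Falpha (α : ℝ) : ℝ → ℝ := fun y => (y ^ α - 1) / (α * (α - 1))

/-- Class (i): the log-density grows at least linearly, `lim φ(x)/x > c > 0`. -/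
def IsClassI (φ : ℝ → ℝ) : Prop :=
  ∃ c : ℝ, 0 < c ∧ ∀ᶠ x in atTop, c < φ x / x

/-- Data witnessing that a distribution with log-density `φ` (density `exp(-φ)`) is of
class (ii): heavier than exponential but lighter than any power law, together with the
auxiliary function `Φ` and the inverse `Ψ = Φ⁻¹` of its restriction to `[x̄, ∞)`. -/
structure ClassIIData (φ : ℝ → ℝ) : Type where
  xbar : ℝ
  Φ : ℝ → ℝ
  Ψ : ℝ → ℝ
  xbar_pos : 0 < xbar
  tendsto_div_id : Tendsto (fun x => φ x / x) atTop (nhds 0)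
  tendsto_div_log : Tendsto (fun x => φ x / Real.log x) atTop atTop
  pos : ∀ x ∈ Set.Ici xbar, 0 < Φ x
  strictConcave : StrictConcaveOn ℝ (Set.Ici xbar) Φ
  smooth : ContDiffOn ℝ 2 Φ (Set.Ici xbar)
  strictMono : StrictMonoOn Φ (Set.Ici xbar)
  inv_left : ∀ x ∈ Set.Ici xbar, Ψ (Φ x) = x
  inv_right : ∀ y ∈ Set.Ici (Φ xbar), Φ (Ψ y) = y
  liminf_pos : ∃ c : ℝ, 0 < c ∧ ∀ᶠ x in atTop, c ≤ Ψ (φ x) / x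
  limsup_lt_top : ∃ C : ℝ, ∀ᶠ x in atTop, Ψ (φ x) / x ≤ C

namespace ClassIIData

variable {φ : ℝ → ℝ}

/-- `ȳ = exp(Φ(x̄))`. -/
def ybar (d : ClassIIData φ) : ℝ := Real.exp (d.Φ d.xbar)

/-- The constant `a = (1+log ȳ)/(Φ⁻¹(log ȳ)^θ + θ Φ⁻¹(log ȳ)^{θ-1} (Φ⁻¹)'(log ȳ))`. -/
def aconst (d : ClassIIData φ) (θ : ℝ) : ℝ :=
  (1 + Real.log d.ybar) /
    (d.Ψ (Real.log d.ybar) ^ θ +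
      θ * d.Ψ (Real.log d.ybar) ^ (θ - 1) * deriv d.Ψ (Real.log d.ybar))

/-- The constant `b = ȳ log ȳ - a ȳ Φ⁻¹(log ȳ)^θ`. -/
def bconst (d : ClassIIData φ) (θ : ℝ) : ℝ :=
  d.ybar * Real.log d.ybar - d.aconst θ * d.ybar * d.Ψ (Real.log d.ybar) ^ θ

/-- The divergence generator `F_Φ`: `y log y` for `y ≤ ȳ` and
`a y Φ⁻¹(log y)^θ + b` for `y > ȳ`. -/
def FPhi (d : ClassIIData φ) (θ : ℝ) : ℝ → ℝ := fun y =>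
  if y ≤ d.ybar then y * Real.log y
  else d.aconst θ * y * d.Ψ (Real.log y) ^ θ + d.bconst θ

/-- `ψ(x) = a Φ⁻¹(x)^θ`. -/
def psiFun (d : ClassIIData φ) (θ : ℝ) : ℝ → ℝ := fun x => d.aconst θ * d.Ψ x ^ θ

/-- The integrand of `I(c) = ∫_c^∞ e^y (ψ(y)+ψ'(y))(ψ'(y)+ψ''(y)) f((F_Φ'(e^y)-α₁)/α₂) dy`. -/
def Iintegrand (d : ClassIIData φ) (θ α₁ α₂ : ℝ) (f : ℝ → ℝ) : ℝ → ℝ := fun y =>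
  Real.exp y * (d.psiFun θ y + deriv (d.psiFun θ) y) *
    (deriv (d.psiFun θ) y + deriv (deriv (d.psiFun θ)) y) *
    f ((deriv (d.FPhi θ) (Real.exp y) - α₁) / α₂)

end ClassIIData

/-- Convex conjugate over `s ≥ 0`: `F*(x) = sup_{s ≥ 0} (x s - F(s))`. -/
def Fstar (F : ℝ → ℝ) : ℝ → ℝ := fun x => sSup ((fun s => x * s - F s) '' Set.Ici (0 : ℝ))

/-- Pseudo-regular variation: `limsup_{c→1} limsup_{x→∞} h(cx)/h(x) = 1`,
spelled out in ε-form. -/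
def PseudoRegularlyVarying (h : ℝ → ℝ) : Prop :=
  (∀ ε > (0:ℝ), ∀ᶠ c in nhds (1:ℝ), ∀ᶠ x in atTop, h (c * x) / h x ≤ 1 + ε) ∧
  (∀ ε > (0:ℝ), ∃ᶠ c in nhds (1:ℝ), ∃ᶠ x in atTop, 1 - ε ≤ h (c * x) / h x)

/-!
For `y > log ȳ` one has `F_Φ(t) = t ψ(log t) + b` near `t = e^y`, hence
`F_Φ'(e^y) = ψ(y) + ψ'(y)` and the integrand of `I` is `e^y (ψ + ψ')(ψ' + ψ'') f((ψ + ψ' - α₁)/α₂)`.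
In both models `ψ → ∞`, `ψ' ≥ 0` and `ψ'`, `ψ''` are `O(ψ)`, so the argument of `f` is eventually
at least `ψ(y)/(2α₂)`, and a majorant `g` of `f` that decreases on a tail gives
`|integrand| = O(e^y ψ(y)² g(ψ(y)/(2α₂)))`. For the Weibull model `ψ(y) = A y^{θ/k}` and this is
`O(y^{2θ/k} exp(y - B y^θ))`. For the generalized lognormal model
`ψ(y) = a exp(θ σ r^{1/r} y^{1/r})`, and `g(ψ(y)/(2α₂))` is eventually below `exp(-θ' y)` for
any `θ' ∈ (1, θ)`, while the prefactor is `exp(y + o(y))`. Since `θ > 1`, both decay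
exponentially; measurability is free because `deriv` of any function is measurable.
-/

open Asymptotics

lemma deriv_deriv_eq_of_hasDerivAt {f f₁ : ℝ → ℝ} {y₀ y f₂ : ℝ}
    (h₁ : ∀ x > y₀, HasDerivAt f (f₁ x) x) (h₂ : HasDerivAt f₁ f₂ y) (hy : y₀ < y) :
    deriv (deriv f) y = f₂ :=
  (h₂.congr_of_eventuallyEq
    (by filter_upwards [Ioi_mem_nhds hy] with x hx using (h₁ x hx).deriv)).deriv

lemma eventually_mul_rpow_le_mul_rpow {a b : ℝ} (hab : a < b) (C : ℝ) {c : ℝ} (hc : 0 < c) :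
    ∀ᶠ y : ℝ in atTop, C * y ^ a ≤ c * y ^ b := by
  have h : Tendsto (fun y : ℝ => C * y ^ (a - b)) atTop (𝓝 0) := by
    simpa using (tendsto_rpow_neg_atTop (sub_pos.2 hab)).const_mul C
  filter_upwards [h.eventually (ge_mem_nhds hc), eventually_gt_atTop 0] with y hy hy0
  calc C * y ^ a = C * y ^ (a - b) * y ^ b := by
        rw [mul_assoc, ← Real.rpow_add hy0, sub_add_cancel]
    _ ≤ c * y ^ b := by gcongr

lemma isBigO_rpow_mul_exp_sub_mul_rpow {s B θ : ℝ} (hB : 0 < B) (hθ : 1 < θ) :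
    (fun y => y ^ s * Real.exp (y - B * y ^ θ)) =O[atTop] fun y => Real.exp (-1 * y) := by
  refine IsBigO.of_bound 1 ?_
  filter_upwards [(isLittleO_rpow_exp_atTop s).bound one_pos,
    eventually_mul_rpow_le_mul_rpow hθ 3 hB, eventually_gt_atTop 0] with y hs hθy hy
  rw [Real.norm_of_nonneg (by positivity), Real.norm_of_nonneg (Real.exp_pos _).le, one_mul] at hs
  rw [Real.norm_of_nonneg (by positivity), Real.norm_of_nonneg (Real.exp_pos _).le, one_mul]
  rw [Real.rpow_one] at hθy
  calc y ^ s * Real.exp (y - B * y ^ θ) ≤ Real.exp y * Real.exp (-2 * y) := by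
        gcongr
        linarith
    _ = Real.exp (-1 * y) := by rw [← Real.exp_add]; ring_nf

lemma isBigO_exp_add_mul_rpow_sub {a C θ' : ℝ} {X : ℝ → ℝ} (ha : a < 1) (hθ' : 1 < θ')
    (hX : ∀ᶠ y in atTop, θ' * y ≤ X y) :
    (fun y => Real.exp (y + C * y ^ a - X y)) =O[atTop]
      fun y => Real.exp (-((θ' - 1) / 2) * y) := by
  refine IsBigO.of_bound 1 ?_
  filter_upwards [hX, eventually_mul_rpow_le_mul_rpow ha C (c := (θ' - 1) / 2) (by linarith)]
    with y hXy hCy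
  rw [Real.rpow_one] at hCy
  rw [Real.norm_of_nonneg (Real.exp_pos _).le, Real.norm_of_nonneg (Real.exp_pos _).le, one_mul]
  gcongr
  linarith

lemma abs_weibullDensity_le {k lam x : ℝ} (hk : 0 ≤ k) (hk1 : k ≤ 1) (hlam : 0 < lam)
    (hx : lam ≤ x) :
    |k / lam * (x / lam) ^ (k - 1) * Real.exp (-((x / lam) ^ k))| ≤
      k / lam * Real.exp (-((x / lam) ^ k)) := by
  have hx1 : 1 ≤ x / lam := (one_le_div hlam).2 hx
  rw [abs_of_nonneg (by positivity)]
  have : (x / lam) ^ (k - 1) ≤ 1 := Real.rpow_le_one_of_one_le_of_nonpos hx1 (by linarith)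
  calc k / lam * (x / lam) ^ (k - 1) * Real.exp (-((x / lam) ^ k))
      ≤ k / lam * 1 * Real.exp (-((x / lam) ^ k)) := by gcongr
    _ = k / lam * Real.exp (-((x / lam) ^ k)) := by rw [mul_one]

lemma antitoneOn_weibullTail {k lam : ℝ} (hk : 0 ≤ k) (hlam : 0 < lam) :
    AntitoneOn (fun x => k / lam * Real.exp (-((x / lam) ^ k))) (Ici 0) := by
  intro a ha b _ hab
  have : 0 ≤ a / lam := div_nonneg ha hlam.le
  dsimp only
  gcongr

lemma abs_lognormalDensity_le {r σ μ Z : ℝ} (hZ : 0 < Z) {x : ℝ} (hx : 1 ≤ x) :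
    |1 / (Z * x) * Real.exp (-(|Real.log x - μ| ^ r / (r * σ ^ r)))| ≤
      1 / Z * Real.exp (-(|Real.log x - μ| ^ r / (r * σ ^ r))) := by
  rw [abs_of_nonneg (by positivity)]
  gcongr
  exact le_mul_of_one_le_right hZ.le hx

lemma antitoneOn_lognormalTail {r σ μ Z : ℝ} (hZ : 0 ≤ Z) (hr : 0 ≤ r) (hσ : 0 ≤ σ) :
    AntitoneOn (fun x => 1 / Z * Real.exp (-(|Real.log x - μ| ^ r / (r * σ ^ r))))
      (Ici (Real.exp μ)) := by
  intro a ha b _ hab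
  have ha0 : 0 < a := (Real.exp_pos μ).trans_le ha
  have hμa : μ ≤ Real.log a := (Real.le_log_iff_exp_le ha0).2 ha
  have hlog : Real.log a ≤ Real.log b := Real.log_le_log ha0 hab
  dsimp only
  rw [abs_of_nonneg (by linarith), abs_of_nonneg (by linarith)]
  gcongr

lemma abs_mul_rpow_sq_add_le {r t y : ℝ} (hr : 1 < r) (ht : 0 ≤ t) (hy : 1 ≤ y) :
    |t * (y ^ (1 / r - 1)) ^ 2 + (1 / r - 1) * y ^ (1 / r - 1 - 1)| ≤ t + 1 := by
  have hr' : 0 < 1 / r := by positivity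
  have hr1 : 1 / r ≤ 1 := (div_le_one (by linarith)).2 hr.le
  have hu0 : 0 ≤ y ^ (1 / r - 1) := by positivity
  have hu1 : y ^ (1 / r - 1) ≤ 1 := Real.rpow_le_one_of_one_le_of_nonpos hy (by linarith)
  have hw0 : 0 ≤ y ^ (1 / r - 1 - 1) := by positivity
  have hw1 : y ^ (1 / r - 1 - 1) ≤ 1 := Real.rpow_le_one_of_one_le_of_nonpos hy (by linarith)
  have hu2 : (y ^ (1 / r - 1)) ^ 2 ≤ 1 := pow_le_one₀ hu0 hu1
  rw [abs_le]
  constructor <;> nlinarith [mul_nonneg hr'.le hw0, sq_nonneg (y ^ (1 / r - 1))]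

lemma eventually_mul_le_abs_add_mul_rpow {r σ : ℝ} (hr : 1 < r) (hσ : 0 < σ) {θ' T : ℝ} (c₀ : ℝ)
    (hθ' : 1 ≤ θ') (hT : θ' * (σ * r ^ (1 / r)) < T) :
    ∀ᶠ y in atTop, θ' * y ≤ |c₀ + T * y ^ (1 / r)| ^ r / (r * σ ^ r) := by
  have hr0 : 0 < r := by linarith
  set s := σ * r ^ (1 / r)
  have hs : s ^ r = σ ^ r * r := by
    rw [Real.mul_rpow hσ.le (by positivity), ← Real.rpow_mul hr0.le, one_div_mul_cancel hr0.ne',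
      Real.rpow_one]
  filter_upwards [((tendsto_rpow_atTop (by positivity : 0 < 1 / r)).const_mul_atTop
    (sub_pos.2 hT)).eventually_ge_atTop (-c₀), eventually_ge_atTop 0] with y hy hy0
  have hlow : θ' * s * y ^ (1 / r) ≤ |c₀ + T * y ^ (1 / r)| :=
    le_abs.2 (Or.inl (by nlinarith))
  have hpow : (θ' * s * y ^ (1 / r)) ^ r = θ' ^ r * (σ ^ r * r) * y := by
    have hθ'0 : 0 ≤ θ' := by linarith
    rw [Real.mul_rpow (by positivity) (by positivity), Real.mul_rpow hθ'0 (by positivity),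
      ← Real.rpow_mul hy0, one_div_mul_cancel hr0.ne', Real.rpow_one, hs]
  rw [le_div_iff₀ (by positivity)]
  calc θ' * y * (r * σ ^ r) ≤ θ' ^ r * (σ ^ r * r) * y := by
        have := Real.self_le_rpow_of_one_le hθ' hr.le
        have : 0 ≤ σ ^ r * r * y := by positivity
        nlinarith
    _ = (θ' * s * y ^ (1 / r)) ^ r := hpow.symm
    _ ≤ |c₀ + T * y ^ (1 / r)| ^ r := by gcongr

namespace ClassIIData

variable {φ : ℝ → ℝ} (d : ClassIIData φ) {θ α₁ α₂ : ℝ}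

lemma log_ybar : Real.log d.ybar = d.Φ d.xbar := Real.log_exp _

lemma log_ybar_pos : 0 < Real.log d.ybar :=
  d.log_ybar ▸ d.pos d.xbar (mem_Ici.2 le_rfl)

lemma aconst_pos (hθ : 0 ≤ θ) (hΨ : 0 < d.Ψ (Real.log d.ybar))
    (hΨ' : 0 ≤ deriv d.Ψ (Real.log d.ybar)) : 0 < d.aconst θ := by
  have := d.log_ybar_pos
  unfold aconst
  positivity

lemma FPhi_of_ybar_lt {t : ℝ} (ht : d.ybar < t) :
    d.FPhi θ t = t * d.psiFun θ (Real.log t) + d.bconst θ := by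
  simp only [FPhi, psiFun, if_neg ht.not_ge]
  ring

lemma hasDerivAt_FPhi_exp {y ψ' : ℝ} (hy : Real.log d.ybar < y)
    (hψ : HasDerivAt (d.psiFun θ) ψ' y) :
    HasDerivAt (d.FPhi θ) (d.psiFun θ y + ψ') (Real.exp y) := by
  have hlt : d.ybar < Real.exp y := Real.exp_lt_exp.2 (d.log_ybar ▸ hy)
  rw [← Real.log_exp y] at hψ
  have h := ((hasDerivAt_id _).mul
    (hψ.comp _ (Real.hasDerivAt_log (Real.exp_pos y).ne'))).add_const (d.bconst θ)
  refine (h.congr_of_eventuallyEq ?_).congr_deriv ?_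
  · filter_upwards [Ioi_mem_nhds hlt] with t ht using d.FPhi_of_ybar_lt ht
  · simp [Real.log_exp]
    field_simp

lemma measurable_psiFun (hΨ : Measurable d.Ψ) : Measurable (d.psiFun θ) :=
  (hΨ.pow_const θ).const_mul _

lemma measurable_Iintegrand {f : ℝ → ℝ} (hΨ : Measurable d.Ψ) (hf : Measurable f) :
    Measurable (d.Iintegrand θ α₁ α₂ f) := by
  have := d.measurable_psiFun (θ := θ) hΨ
  have := measurable_deriv (d.FPhi θ)
  have := measurable_deriv (d.psiFun θ)
  have := measurable_deriv (deriv (d.psiFun θ))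
  unfold Iintegrand
  fun_prop

lemma exists_integrableOn_Iintegrand {δ : ℝ} {f f' : ℝ → ℝ} (hδ : 0 < δ)
    (hΨ : Measurable d.Ψ) (hf' : Measurable f') (hff' : EqOn f f' (Ioi 0))
    (hpos : ∀ᶠ y in atTop, 0 < (deriv (d.FPhi θ) (Real.exp y) - α₁) / α₂)
    (hO : d.Iintegrand θ α₁ α₂ f =O[atTop] fun y => Real.exp (-δ * y)) :
    ∃ c : ℝ, 0 < c ∧ (∀ y ∈ Ici c, 0 < (deriv (d.FPhi θ) (Real.exp y) - α₁) / α₂) ∧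
      IntegrableOn (d.Iintegrand θ α₁ α₂ f) (Ioi c) := by
  have heq : ∀ y, 0 < (deriv (d.FPhi θ) (Real.exp y) - α₁) / α₂ →
      d.Iintegrand θ α₁ α₂ f y = d.Iintegrand θ α₁ α₂ f' y := fun y hy => by
    simp only [Iintegrand, hff' hy]
  obtain ⟨s, hs, hint⟩ : IntegrableAtFilter (d.Iintegrand θ α₁ α₂ f') atTop :=
    (hO.congr' (hpos.mono heq) EventuallyEq.rfl).integrableAtFilter
      (d.measurable_Iintegrand hΨ hf').aestronglyMeasurable.stronglyMeasurableAtFilter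
      ⟨Ioi 0, Ioi_mem_atTop 0, exp_neg_integrableOn_Ioi 0 hδ⟩
  obtain ⟨c, hc⟩ := eventually_atTop.1 (hpos.and hs)
  refine ⟨max c 1, by positivity, fun y hy => (hc y (le_of_max_le_left hy)).1, ?_⟩
  refine (hint.mono_set fun y hy => (hc y (le_of_max_le_left hy.le)).2).congr_fun
    (fun y hy => (heq y (hc y (le_of_max_le_left hy.le)).1).symm) measurableSet_Ioi

section Comparison

variable {y₀ : ℝ} {ψ₁ ψ₂ : ℝ → ℝ}

lemma eventually_deriv_FPhi_exp (hψ₁ : ∀ y > y₀, HasDerivAt (d.psiFun θ) (ψ₁ y) y) :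
    ∀ᶠ y in atTop, deriv (d.FPhi θ) (Real.exp y) = d.psiFun θ y + ψ₁ y := by
  filter_upwards [eventually_gt_atTop y₀, eventually_gt_atTop (Real.log d.ybar)] with y hy₀ hy
  exact (d.hasDerivAt_FPhi_exp hy (hψ₁ y hy₀)).deriv

lemma eventually_div_le_arg (hα₂ : 0 < α₂) (hψ : Tendsto (d.psiFun θ) atTop atTop)
    (hψ₁ : ∀ y > y₀, HasDerivAt (d.psiFun θ) (ψ₁ y) y) (hψ₁_nonneg : ∀ᶠ y in atTop, 0 ≤ ψ₁ y) :
    ∀ᶠ y in atTop,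
      d.psiFun θ y / (2 * α₂) ≤ (deriv (d.FPhi θ) (Real.exp y) - α₁) / α₂ := by
  filter_upwards [d.eventually_deriv_FPhi_exp hψ₁, hψ₁_nonneg, hψ.eventually_ge_atTop (2 * α₁)]
    with y hF h₁ hα₁
  rw [hF, div_le_div_iff₀ (by positivity) hα₂]
  nlinarith

lemma eventually_arg_pos (hα₂ : 0 < α₂) (hψ : Tendsto (d.psiFun θ) atTop atTop)
    (hψ₁ : ∀ y > y₀, HasDerivAt (d.psiFun θ) (ψ₁ y) y) (hψ₁_nonneg : ∀ᶠ y in atTop, 0 ≤ ψ₁ y) :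
    ∀ᶠ y in atTop, 0 < (deriv (d.FPhi θ) (Real.exp y) - α₁) / α₂ := by
  filter_upwards [d.eventually_div_le_arg hα₂ hψ hψ₁ hψ₁_nonneg, hψ.eventually_gt_atTop 0]
    with y hle hpos
  exact lt_of_lt_of_le (by positivity) hle

lemma isBigO_Iintegrand {f g : ℝ → ℝ} {x₀ C₁ C₂ : ℝ} (hα₂ : 0 < α₂)
    (hψ : Tendsto (d.psiFun θ) atTop atTop)
    (hψ₁ : ∀ y > y₀, HasDerivAt (d.psiFun θ) (ψ₁ y) y) (hψ₂ : ∀ y > y₀, HasDerivAt ψ₁ (ψ₂ y) y)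
    (hψ₁_bound : ∀ᶠ y in atTop, 0 ≤ ψ₁ y ∧ ψ₁ y ≤ C₁ * d.psiFun θ y)
    (hψ₂_bound : ∀ᶠ y in atTop, |ψ₂ y| ≤ C₂ * d.psiFun θ y)
    (hfg : ∀ x ≥ x₀, |f x| ≤ g x) (hg : AntitoneOn g (Ici x₀)) :
    d.Iintegrand θ α₁ α₂ f =O[atTop]
      fun y => Real.exp y * d.psiFun θ y ^ 2 * g (d.psiFun θ y / (2 * α₂)) := by
  refine IsBigO.of_bound ((1 + C₁) * (C₁ + C₂)) ?_
  filter_upwards [eventually_gt_atTop y₀, d.eventually_div_le_arg hα₂ hψ hψ₁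
    (hψ₁_bound.mono fun _ h => h.1), hψ₁_bound, hψ₂_bound,
    hψ.eventually_ge_atTop (2 * α₂ * max x₀ 0)] with y hy hQ ⟨h₁, h₁'⟩ h₂ hx₀
  have hI : d.Iintegrand θ α₁ α₂ f y = Real.exp y * (d.psiFun θ y + ψ₁ y) * (ψ₁ y + ψ₂ y) *
      f ((deriv (d.FPhi θ) (Real.exp y) - α₁) / α₂) := by
    rw [Iintegrand, (hψ₁ y hy).deriv, deriv_deriv_eq_of_hasDerivAt hψ₁ (hψ₂ y hy) hy]
  set ψ := d.psiFun θ
  set Q := (deriv (d.FPhi θ) (Real.exp y) - α₁) / α₂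
  have hx : x₀ ≤ ψ y / (2 * α₂) := by
    rw [le_div_iff₀ (by positivity)]; nlinarith [le_max_left x₀ 0]
  have hψ0 : 0 ≤ ψ y := by nlinarith [le_max_right x₀ 0]
  have hfQ : |f Q| ≤ g (ψ y / (2 * α₂)) :=
    (hfg Q (hx.trans hQ)).trans (hg hx (hx.trans hQ) hQ)
  have hg0 : 0 ≤ g (ψ y / (2 * α₂)) := (abs_nonneg _).trans (hfg _ hx)
  have hv : |ψ₁ y + ψ₂ y| ≤ (C₁ + C₂) * ψ y := by
    have := abs_add_le (ψ₁ y) (ψ₂ y)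
    rw [abs_of_nonneg h₁] at this
    linarith
  rw [hI, Real.norm_eq_abs, Real.norm_eq_abs, abs_of_nonneg (mul_nonneg (by positivity) hg0)]
  calc |Real.exp y * (ψ y + ψ₁ y) * (ψ₁ y + ψ₂ y) * f Q|
      = Real.exp y * (ψ y + ψ₁ y) * |ψ₁ y + ψ₂ y| * |f Q| := by
        rw [abs_mul, abs_mul, abs_mul, abs_of_pos (Real.exp_pos y),
          abs_of_nonneg (by linarith : 0 ≤ ψ y + ψ₁ y)]
    _ ≤ Real.exp y * ((1 + C₁) * ψ y) * ((C₁ + C₂) * ψ y) * g (ψ y / (2 * α₂)) := by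
        have hu : ψ y + ψ₁ y ≤ (1 + C₁) * ψ y := by linarith
        have hu0 : 0 ≤ Real.exp y * ((1 + C₁) * ψ y) :=
          mul_nonneg (Real.exp_pos y).le (by linarith)
        exact mul_le_mul (mul_le_mul (mul_le_mul_of_nonneg_left hu (Real.exp_pos y).le) hv
          (abs_nonneg _) hu0) hfQ (abs_nonneg _) (mul_nonneg hu0 ((abs_nonneg _).trans hv))
    _ = (1 + C₁) * (C₁ + C₂) * (Real.exp y * ψ y ^ 2 * g (ψ y / (2 * α₂))) := by ring

end Comparison

section Weibull

variable {k lam : ℝ}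

lemma psiFun_of_weibull (hΨ : d.Ψ = fun y => lam * y ^ (1 / k)) (hlam : 0 ≤ lam) {y : ℝ}
    (hy : 0 ≤ y) : d.psiFun θ y = d.aconst θ * lam ^ θ * y ^ (θ / k) := by
  rw [psiFun, hΨ, Real.mul_rpow hlam (Real.rpow_nonneg hy _), ← Real.rpow_mul hy,
    one_div_mul_eq_div, mul_assoc]

lemma hasDerivAt_psiFun_of_weibull (hΨ : d.Ψ = fun y => lam * y ^ (1 / k)) (hlam : 0 ≤ lam)
    {y : ℝ} (hy : 0 < y) :
    HasDerivAt (d.psiFun θ) (d.aconst θ * lam ^ θ * (θ / k * y ^ (θ / k - 1))) y :=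
  ((Real.hasDerivAt_rpow_const (Or.inl hy.ne')).const_mul _).congr_of_eventuallyEq
    (by filter_upwards [Ioi_mem_nhds hy] with x hx using d.psiFun_of_weibull hΨ hlam hx.le)

lemma aconst_pos_of_weibull (hΨ : d.Ψ = fun y => lam * y ^ (1 / k)) (hk : 0 < k)
    (hlam : 0 < lam) (hθ : 0 ≤ θ) : 0 < d.aconst θ := by
  have hL := d.log_ybar_pos
  refine d.aconst_pos hθ (by rw [hΨ]; positivity) ?_
  rw [hΨ, ((Real.hasDerivAt_rpow_const (Or.inl hL.ne')).const_mul lam).deriv]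
  positivity

lemma isBigO_weibull_majorant (hΨ : d.Ψ = fun y => lam * y ^ (1 / k)) (hk : 0 < k)
    (hlam : 0 < lam) (hθ : 1 < θ) (hα₂ : 0 < α₂) :
    (fun y => Real.exp y * d.psiFun θ y ^ 2 *
      (k / lam * Real.exp (-((d.psiFun θ y / (2 * α₂) / lam) ^ k)))) =O[atTop]
      fun y => Real.exp (-1 * y) := by
  set A := d.aconst θ * lam ^ θ
  have hA : 0 < A := mul_pos (d.aconst_pos_of_weibull hΨ hk hlam (by linarith)) (by positivity)
  set B := (A / (2 * α₂ * lam)) ^ k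
  have hmaj : (fun y => A ^ 2 * (k / lam) * (y ^ (2 * (θ / k)) * Real.exp (y - B * y ^ θ)))
      =ᶠ[atTop] fun y => Real.exp y * d.psiFun θ y ^ 2 *
        (k / lam * Real.exp (-((d.psiFun θ y / (2 * α₂) / lam) ^ k))) := by
    filter_upwards [eventually_ge_atTop 0] with y hy
    have hpow : (A * y ^ (θ / k) / (2 * α₂) / lam) ^ k = B * y ^ θ := by
      rw [show A * y ^ (θ / k) / (2 * α₂) / lam = A / (2 * α₂ * lam) * y ^ (θ / k) by ring,
        Real.mul_rpow (by positivity) (by positivity), ← Real.rpow_mul hy,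
        div_mul_cancel₀ θ hk.ne']
    rw [d.psiFun_of_weibull hΨ hlam.le hy, hpow, mul_comm 2, Real.rpow_mul hy, Real.rpow_two,
      Real.exp_sub, Real.exp_neg]
    field_simp
    ring
  exact ((isBigO_rpow_mul_exp_sub_mul_rpow (by positivity) hθ).const_mul_left _).congr'
    hmaj EventuallyEq.rfl

theorem exists_integrableOn_Iintegrand_of_weibull {f : ℝ → ℝ} (hk0 : 0 < k)
    (hk1 : k < 1) (hlam : 0 < lam)
    (hf : ∀ x ∈ Ioi (0 : ℝ), f x = k / lam * (x / lam) ^ (k - 1) * Real.exp (-((x / lam) ^ k)))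
    (hΨ : d.Ψ = fun y => lam * y ^ (1 / k)) (hθ : 1 < θ) (hα₂ : 0 < α₂) :
    ∃ c : ℝ, 0 < c ∧ (∀ y ∈ Ici c, 0 < (deriv (d.FPhi θ) (Real.exp y) - α₁) / α₂) ∧
      IntegrableOn (d.Iintegrand θ α₁ α₂ f) (Ioi c) := by
  set A := d.aconst θ * lam ^ θ
  set p := θ / k
  have hA : 0 < A := mul_pos (d.aconst_pos_of_weibull hΨ hk0 hlam (by linarith)) (by positivity)
  have hp : 1 < p := (one_lt_div hk0).2 (by linarith)
  have hψ_eq : ∀ᶠ y in atTop, d.psiFun θ y = A * y ^ p :=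
    (eventually_ge_atTop 0).mono fun y hy => d.psiFun_of_weibull hΨ hlam.le hy
  have hψ : Tendsto (d.psiFun θ) atTop atTop :=
    ((tendsto_rpow_atTop (by linarith)).const_mul_atTop hA).congr'
      (hψ_eq.mono fun _ h => h.symm)
  have hψ₁ : ∀ y > 0, HasDerivAt (d.psiFun θ) (A * (p * y ^ (p - 1))) y :=
    fun y hy => d.hasDerivAt_psiFun_of_weibull hΨ hlam.le hy
  have hψ₂ : ∀ y > 0, HasDerivAt (fun y => A * (p * y ^ (p - 1)))
      (A * (p * ((p - 1) * y ^ (p - 1 - 1)))) y :=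
    fun y hy => ((Real.hasDerivAt_rpow_const (Or.inl hy.ne')).const_mul p).const_mul A
  have hbounds : ∀ᶠ y in atTop,
      (0 ≤ A * (p * y ^ (p - 1)) ∧ A * (p * y ^ (p - 1)) ≤ p * d.psiFun θ y) ∧
      |A * (p * ((p - 1) * y ^ (p - 1 - 1)))| ≤ p * (p - 1) * d.psiFun θ y := by
    filter_upwards [hψ_eq, eventually_ge_atTop 1] with y hy hy1
    have h1 : y ^ (p - 1) ≤ y ^ p := Real.rpow_le_rpow_of_exponent_le hy1 (by linarith)
    have h2 : y ^ (p - 1 - 1) ≤ y ^ p := Real.rpow_le_rpow_of_exponent_le hy1 (by linarith)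
    have h3 : 0 ≤ p - 1 := by linarith
    rw [hy, abs_of_nonneg (by positivity)]
    refine ⟨⟨by positivity, ?_⟩, ?_⟩
    · calc A * (p * y ^ (p - 1)) ≤ A * (p * y ^ p) := by gcongr
        _ = p * (A * y ^ p) := by ring
    · calc A * (p * ((p - 1) * y ^ (p - 1 - 1))) ≤ A * (p * ((p - 1) * y ^ p)) := by gcongr
        _ = p * (p - 1) * (A * y ^ p) := by ring
  have hO := d.isBigO_Iintegrand (α₁ := α₁) hα₂ hψ hψ₁ hψ₂ (hbounds.mono fun _ h => h.1)
    (hbounds.mono fun _ h => h.2)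
    (fun x hx => (hf x (hlam.trans_le hx)).symm ▸ abs_weibullDensity_le hk0.le hk1.le hlam hx)
    ((antitoneOn_weibullTail hk0.le hlam).mono (Ici_subset_Ici.2 hlam.le))
  exact d.exists_integrableOn_Iintegrand one_pos (by rw [hΨ]; fun_prop) (by fun_prop) hf
    (d.eventually_arg_pos hα₂ hψ hψ₁ (hbounds.mono fun _ h => h.1.1))
    (hO.trans (d.isBigO_weibull_majorant hΨ hk0 hlam hθ hα₂))

end Weibull

section Lognormal

variable {r σ μ Z : ℝ}

lemma psiFun_of_lognormal (hΨ : d.Ψ = fun y => Real.exp (σ * r ^ (1 / r) * y ^ (1 / r))) :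
    d.psiFun θ = fun y => d.aconst θ * Real.exp (θ * σ * r ^ (1 / r) * y ^ (1 / r)) := by
  funext y
  rw [psiFun, hΨ, ← Real.exp_mul]
  ring_nf

lemma hasDerivAt_psiFun_of_lognormal
    (hΨ : d.Ψ = fun y => Real.exp (σ * r ^ (1 / r) * y ^ (1 / r))) {y : ℝ} (hy : 0 < y) :
    HasDerivAt (d.psiFun θ) (θ * σ * r ^ (1 / r) / r * y ^ (1 / r - 1) * d.psiFun θ y) y := by
  rw [d.psiFun_of_lognormal hΨ]
  exact (((Real.hasDerivAt_rpow_const (Or.inl hy.ne')).const_mul _).exp.const_mul _).congr_deriv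
    (by ring)

lemma aconst_pos_of_lognormal (hΨ : d.Ψ = fun y => Real.exp (σ * r ^ (1 / r) * y ^ (1 / r)))
    (hr : 0 < r) (hσ : 0 < σ) (hθ : 0 ≤ θ) : 0 < d.aconst θ := by
  have hL := d.log_ybar_pos
  refine d.aconst_pos hθ (by rw [hΨ]; positivity) ?_
  rw [hΨ, (((Real.hasDerivAt_rpow_const (Or.inl hL.ne')).const_mul _).exp).deriv]
  positivity

lemma isBigO_lognormal_majorant (hΨ : d.Ψ = fun y => Real.exp (σ * r ^ (1 / r) * y ^ (1 / r)))
    (hr : 1 < r) (hσ : 0 < σ) (hθ : 1 < θ) (hα₂ : 0 < α₂) (μ Z : ℝ) :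
    ∃ δ > 0, (fun y => Real.exp y * d.psiFun θ y ^ 2 *
      (1 / Z * Real.exp (-(|Real.log (d.psiFun θ y / (2 * α₂)) - μ| ^ r / (r * σ ^ r)))))
      =O[atTop] fun y => Real.exp (-δ * y) := by
  have ha := d.aconst_pos_of_lognormal (θ := θ) hΨ (by linarith) hσ (by linarith)
  have hψ := d.psiFun_of_lognormal (θ := θ) hΨ
  set a := d.aconst θ
  set T := θ * σ * r ^ (1 / r)
  set c₀ := Real.log (a / (2 * α₂)) - μ
  have hmaj : (fun y => a ^ 2 / Z * Real.exp (y + 2 * T * y ^ (1 / r) -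
      |c₀ + T * y ^ (1 / r)| ^ r / (r * σ ^ r))) =ᶠ[atTop]
      fun y => Real.exp y * d.psiFun θ y ^ 2 *
        (1 / Z * Real.exp (-(|Real.log (d.psiFun θ y / (2 * α₂)) - μ| ^ r / (r * σ ^ r)))) := by
    refine Eventually.of_forall fun y => ?_
    have hlog : Real.log (a * Real.exp (T * y ^ (1 / r)) / (2 * α₂)) - μ =
        c₀ + T * y ^ (1 / r) := by
      rw [mul_div_right_comm, Real.log_mul (by positivity) (Real.exp_pos _).ne', Real.log_exp]
      ring
    simp only [hψ, hlog, sub_eq_add_neg, Real.exp_add]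
    rw [show 2 * T * y ^ (1 / r) = T * y ^ (1 / r) + T * y ^ (1 / r) by ring, Real.exp_add]
    ring
  -- `(1 + θ) / 2` only serves as some exponent strictly between `1` and `θ`
  have hT : (1 + θ) / 2 * (σ * r ^ (1 / r)) < T := by
    simp only [T, mul_assoc θ]
    exact mul_lt_mul_of_pos_right (by linarith) (by positivity)
  exact ⟨((1 + θ) / 2 - 1) / 2, by linarith,
    ((isBigO_exp_add_mul_rpow_sub (by bound) (by linarith)
      (eventually_mul_le_abs_add_mul_rpow hr hσ c₀ (by linarith) hT)).const_mul_left _).congr'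
      hmaj EventuallyEq.rfl⟩

theorem exists_integrableOn_Iintegrand_of_lognormal {f : ℝ → ℝ} (hr : 1 < r)
    (hσ : 0 < σ) (hZ : Z = 2 * r ^ (1 / r) * σ * Real.Gamma (1 + 1 / r))
    (hf : ∀ x ∈ Ioi (0 : ℝ),
      f x = 1 / (Z * x) * Real.exp (-(|Real.log x - μ| ^ r / (r * σ ^ r))))
    (hΨ : d.Ψ = fun y => Real.exp (σ * r ^ (1 / r) * y ^ (1 / r))) (hθ : 1 < θ)
    (hα₂ : 0 < α₂) :
    ∃ c : ℝ, 0 < c ∧ (∀ y ∈ Ici c, 0 < (deriv (d.FPhi θ) (Real.exp y) - α₁) / α₂) ∧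
      IntegrableOn (d.Iintegrand θ α₁ α₂ f) (Ioi c) := by
  have hr0 : 0 < r := by linarith
  have hZ0 : 0 < Z := hZ ▸ by
    have := Real.Gamma_pos_of_pos (by positivity : 0 < 1 + 1 / r); positivity
  set t := θ * σ * r ^ (1 / r) / r
  have ht : 0 < t := by positivity
  have hψ : Tendsto (d.psiFun θ) atTop atTop := by
    rw [d.psiFun_of_lognormal hΨ]
    exact (Real.tendsto_exp_atTop.comp ((tendsto_rpow_atTop (by positivity)).const_mul_atTop
      (by positivity))).const_mul_atTop (d.aconst_pos_of_lognormal hΨ hr0 hσ (by linarith))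
  have hψ₁ : ∀ y > 0, HasDerivAt (d.psiFun θ) (t * y ^ (1 / r - 1) * d.psiFun θ y) y :=
    fun y hy => d.hasDerivAt_psiFun_of_lognormal hΨ hy
  have hψ₂ : ∀ y > 0, HasDerivAt (fun y => t * y ^ (1 / r - 1) * d.psiFun θ y)
      (t * (t * (y ^ (1 / r - 1)) ^ 2 + (1 / r - 1) * y ^ (1 / r - 1 - 1)) * d.psiFun θ y) y :=
    fun y hy => (((Real.hasDerivAt_rpow_const (Or.inl hy.ne')).const_mul t).mul
      (hψ₁ y hy)).congr_deriv (by ring)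
  have hbounds : ∀ᶠ y in atTop,
      (0 ≤ t * y ^ (1 / r - 1) * d.psiFun θ y ∧
        t * y ^ (1 / r - 1) * d.psiFun θ y ≤ t * d.psiFun θ y) ∧
      |t * (t * (y ^ (1 / r - 1)) ^ 2 + (1 / r - 1) * y ^ (1 / r - 1 - 1)) * d.psiFun θ y|
        ≤ t * (t + 1) * d.psiFun θ y := by
    filter_upwards [eventually_ge_atTop 1, hψ.eventually_ge_atTop 0] with y hy hψy
    have hu : y ^ (1 / r - 1) ≤ 1 := Real.rpow_le_one_of_one_le_of_nonpos hy
      (by have : 1 / r ≤ 1 := (div_le_one hr0).2 hr.le; linarith)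
    rw [abs_mul, abs_mul, abs_of_pos ht, abs_of_nonneg hψy]
    refine ⟨⟨by positivity, mul_le_mul_of_nonneg_right (mul_le_of_le_one_right ht.le hu) hψy⟩, ?_⟩
    gcongr
    exact abs_mul_rpow_sq_add_le hr ht.le hy
  obtain ⟨δ, hδ, hmaj⟩ := d.isBigO_lognormal_majorant hΨ hr hσ hθ hα₂ μ Z
  have hO := d.isBigO_Iintegrand (α₁ := α₁) hα₂ hψ hψ₁ hψ₂ (hbounds.mono fun _ h => h.1)
    (hbounds.mono fun _ h => h.2)
    (fun x hx => (hf x (one_pos.trans_le (le_of_max_le_left hx))).symm ▸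
      abs_lognormalDensity_le hZ0 (le_of_max_le_left hx))
    ((antitoneOn_lognormalTail hZ0.le hr0.le hσ.le).mono (Ici_subset_Ici.2 (le_max_right _ _)))
  exact d.exists_integrableOn_Iintegrand hδ (by rw [hΨ]; fun_prop) (by fun_prop) hf
    (d.eventually_arg_pos hα₂ hψ hψ₁ (hbounds.mono fun _ h => h.1.1)) (hO.trans hmaj)

end Lognormal

end ClassIIData

theorem stmt17_general
    (φ f : ℝ → ℝ)
    (d : ClassIIData φ)
    (hcase :
      (∃ k lam : ℝ, 0 < k ∧ k < 1 ∧ 0 < lam ∧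
        (∀ x ∈ Set.Ioi (0:ℝ),
          f x = k / lam * (x / lam) ^ (k - 1) * Real.exp (-((x / lam) ^ k))) ∧
        d.Φ = (fun x => (x / lam) ^ k) ∧
        d.Ψ = (fun y => lam * y ^ (1 / k))) ∨
      (∃ r σ μ Z : ℝ, 1 < r ∧ 0 < σ ∧
        Z = 2 * r ^ (1 / r) * σ * Real.Gamma (1 + 1 / r) ∧
        (∀ x ∈ Set.Ioi (0:ℝ),
          f x = 1 / (Z * x) * Real.exp (-(|Real.log x - μ| ^ r / (r * σ ^ r)))) ∧
        d.Φ = (fun x => Real.log x ^ r / (r * σ ^ r)) ∧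
        d.Ψ = (fun y => Real.exp (σ * r ^ (1 / r) * y ^ (1 / r))))) :
    ∀ θ : ℝ, 1 < θ → ∀ α₁ : ℝ, ∀ α₂ : ℝ, 0 < α₂ → ∃ c : ℝ, 0 < c ∧
      (∀ y ∈ Set.Ici c, 0 < (deriv (d.FPhi θ) (Real.exp y) - α₁) / α₂) ∧
      IntegrableOn (d.Iintegrand θ α₁ α₂ f) (Set.Ioi c) := by
  intro θ hθ α₁ α₂ hα₂
  rcases hcase with ⟨k, lam, hk0, hk1, hlam, hf, -, hΨ⟩ | ⟨r, σ, μ, Z, hr, hσ, hZ, hf, -, hΨ⟩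
  · exact d.exists_integrableOn_Iintegrand_of_weibull hk0 hk1 hlam hf hΨ hθ hα₂
  · exact d.exists_integrableOn_Iintegrand_of_lognormal hr hσ hZ hf hΨ hθ hα₂

/-- Corollary 5.2: `I(c)` is finite for Weibull and generalized
lognormal reference models. -/
theorem stmt17
    (φ f : ℝ → ℝ)
    (hf : ∀ x ∈ Set.Ioi (0:ℝ), f x = Real.exp (-(φ x)))
    (d : ClassIIData φ)
    (hcase :
      (∃ k lam : ℝ, 0 < k ∧ k < 1 ∧ 0 < lam ∧
        (∀ x ∈ Set.Ioi (0:ℝ),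
          f x = k / lam * (x / lam) ^ (k - 1) * Real.exp (-((x / lam) ^ k))) ∧
        d.Φ = (fun x => (x / lam) ^ k) ∧
        d.Ψ = (fun y => lam * y ^ (1 / k))) ∨
      (∃ r σ μ Z : ℝ, 1 < r ∧ 0 < σ ∧
        Z = 2 * r ^ (1 / r) * σ * Real.Gamma (1 + 1 / r) ∧
        (∀ x ∈ Set.Ioi (0:ℝ),
          f x = 1 / (Z * x) * Real.exp (-(|Real.log x - μ| ^ r / (r * σ ^ r)))) ∧
        d.Φ = (fun x => Real.log x ^ r / (r * σ ^ r)) ∧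
        d.Ψ = (fun y => Real.exp (σ * r ^ (1 / r) * y ^ (1 / r))))) :
    ∀ θ : ℝ, 1 < θ → ∀ α₁ : ℝ, ∀ α₂ : ℝ, 0 < α₂ → ∃ c : ℝ, 0 < c ∧
      (∀ y ∈ Set.Ici c, 0 < (deriv (d.FPhi θ) (Real.exp y) - α₁) / α₂) ∧
      IntegrableOn (d.Iintegrand θ α₁ α₂ f) (Set.Ioi c) :=
  stmt17_general φ f d hcase
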